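/- In a d-regular graph where all nodes have the same initial features and node representations evolve by message passing as in Lemma 1, any node scoring function φ that depends only on the node's representation (and on aggregated representations of its k-hop neighborhood computed by such message passing) assigns the same score to all nodes; hence Top-K selection based on φ cannot distinguish any two nodes. -/
import Mathlib

/-- In a `d`-regular graph with identical initial node features, any node scoring
function that depends only on node representations produced by message passing
(aggregating multisets of neighbor representations) assigns the same score to all
nodes; hence Top-K selection based on such a score cannot distinguish any two nodes. -/
theorem stmt_1 {V F : Type*} [Fintype V] [DecidableEq V] (G : SimpleGraph V)
    [DecidableRel G.Adj] (d : ℕ) (hreg : G.IsRegularOfDegree d)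
    (h : ℕ → V → F) (merge : ℕ → F → F → F) (agg : ℕ → Multiset F → F)
    (c : F) (h0 : ∀ v : V, h 0 v = c)
    (hstep : ∀ (k : ℕ) (v : V), h (k + 1) v =
      merge (k + 1) (h k v) (agg (k + 1) ((G.neighborFinset v).val.map (h k))))
    (K : ℕ) (score : F → ℝ) (φ : V → ℝ) (hφ : ∀ v : V, φ v = score (h K v)) :
    ∀ v₁ v₂ : V, φ v₁ = φ v₂ := by
  have key : ∀ k, ∃ a, ∀ v, h k v = a := by
    intro k
    induction k with
    | zero => exact ⟨c, h0⟩
    | succ k ih =>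
      obtain ⟨a, ha⟩ := ih
      refine ⟨merge (k + 1) a (agg (k + 1) (Multiset.replicate d a)), fun v => ?_⟩
      rw [hstep, ha]
      congr 1
      have : (G.neighborFinset v).val.map (h k) =
          (G.neighborFinset v).val.map (fun _ => a) := by
        apply Multiset.map_congr rfl
        intro x _; exact ha x
      rw [this]
      congr 1
      rw [Multiset.map_const']
      congr 1
      simpa using hreg v
  obtain ⟨a, ha⟩ := key K
  intro v₁ v₂
  rw [hφ, hφ, ha, ha]
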